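/- The bilinear map β⁽¹⁾ on L₁ defined by β⁽¹⁾(l_n, l_m) = (m−n) l_{n+m−1} is a 2-coboundary: there is a linear map γ : L₁ → L₁ with β⁽¹⁾ = d₁γ, hence its class in H²(L₁,L₁) is zero. -/

import Mathlib

/-!
Take `γ(l_n) = ((n-1)/2) l_{n-1}`, with `γ(l_1) = 0`. Both sides are bilinear, so it suffices to
compare them on `(l_n, l_m)`, where every term is a multiple of `l_{n+m-1}` and the claim is the
polynomial identity `(m-n)(n+m-1) - (n-1)(m-n+1) - (m-1)(m-1-n) = 2(m-n)`. Since the coefficient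
`(n-1)/2` vanishes at `n = 1`, the missing `l_0` causes no case distinction in that identity.
-/

noncomputable section

/-- Index set for `L₁`: integers `n ≥ 1`. -/
abbrev PosIdx : Type := {n : ℤ // 1 ≤ n}

/-- Bilinear extension of structure constants `C` to a bracket on the free module. -/
def brP (C : PosIdx → PosIdx → (PosIdx →₀ ℂ)) (x y : PosIdx →₀ ℂ) : PosIdx →₀ ℂ :=
  x.sum fun n a => y.sum fun m b => (a * b) • C n m

/-- Structure constants of `L₁`: `[l_n, l_m] = (m-n) l_{n+m}`. -/
def L1C (n m : PosIdx) : PosIdx →₀ ℂ :=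
  Finsupp.single ⟨n.1 + m.1, by have := n.2; have := m.2; omega⟩ ((m.1 : ℂ) - (n.1 : ℂ))

/-- The cochain `β⁽¹⁾(l_n, l_m) = (m-n) l_{n+m-1}`. -/
def beta1C (n m : PosIdx) : PosIdx →₀ ℂ :=
  Finsupp.single ⟨n.1 + m.1 - 1, by have := n.2; have := m.2; omega⟩ ((m.1 : ℂ) - (n.1 : ℂ))

def brPBilin (C : PosIdx → PosIdx → (PosIdx →₀ ℂ)) :
    (PosIdx →₀ ℂ) →ₗ[ℂ] (PosIdx →₀ ℂ) →ₗ[ℂ] (PosIdx →₀ ℂ) :=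
  Finsupp.linearCombination ℂ fun n => Finsupp.linearCombination ℂ (C n)

theorem brPBilin_apply (C : PosIdx → PosIdx → (PosIdx →₀ ℂ)) (x y : PosIdx →₀ ℂ) :
    brPBilin C x y = brP C x y := by
  simp only [brPBilin, brP, Finsupp.linearCombination_apply, LinearMap.finsupp_sum_apply,
    LinearMap.smul_apply, Finsupp.smul_sum, mul_smul]

theorem brPBilin_single_single (C : PosIdx → PosIdx → (PosIdx →₀ ℂ)) (n m : PosIdx) (a b : ℂ) :
    brPBilin C (Finsupp.single n a) (Finsupp.single m b) = (a * b) • C n m := by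
  simp [brPBilin, mul_smul, smul_comm a b]

def addPred (n m : PosIdx) : PosIdx := ⟨n.1 + m.1 - 1, by have := n.2; have := m.2; omega⟩

def gammaC (n : PosIdx) : PosIdx →₀ ℂ :=
  if h : 1 < n.1 then Finsupp.single ⟨n.1 - 1, by omega⟩ (((n.1 : ℂ) - 1) / 2) else 0

theorem gammaC_bracket_left (n m : PosIdx) :
    brPBilin L1C (gammaC n) (Finsupp.single m 1)
      = Finsupp.single (addPred n m) (((n.1 : ℂ) - 1) / 2 * (m.1 - n.1 + 1)) := by
  unfold gammaC
  split_ifs with h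
  · rw [brPBilin_single_single, L1C, Finsupp.smul_single]
    congr 1
    · exact Subtype.ext (by simp only [addPred]; ring)
    · push_cast; ring
  · have hn : (n.1 : ℂ) = 1 := by exact_mod_cast (show n.1 = 1 by have := n.2; omega)
    simp [hn]

theorem gammaC_bracket_right (n m : PosIdx) :
    brPBilin L1C (Finsupp.single n 1) (gammaC m)
      = Finsupp.single (addPred n m) (((m.1 : ℂ) - 1) / 2 * (m.1 - 1 - n.1)) := by
  unfold gammaC
  split_ifs with h
  · rw [brPBilin_single_single, L1C, Finsupp.smul_single]
    congr 1
    · exact Subtype.ext (by simp only [addPred]; ring)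
    · push_cast; ring
  · have hm : (m.1 : ℂ) = 1 := by exact_mod_cast (show m.1 = 1 by have := m.2; omega)
    simp [hm]

theorem linearCombination_gammaC_L1C (n m : PosIdx) :
    Finsupp.linearCombination ℂ gammaC (L1C n m)
      = Finsupp.single (addPred n m) (((m.1 : ℂ) - n.1) * ((n.1 + m.1 - 1) / 2)) := by
  have h : 1 < n.1 + m.1 := by have := n.2; have := m.2; omega
  rw [L1C, Finsupp.linearCombination_single, gammaC, dif_pos h, Finsupp.smul_single]
  congr 1
  push_cast; ring

theorem beta1C_eq_coboundary_gammaC (n m : PosIdx) :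
    beta1C n m = Finsupp.linearCombination ℂ gammaC (L1C n m)
      - brPBilin L1C (gammaC n) (Finsupp.single m 1)
      - brPBilin L1C (Finsupp.single n 1) (gammaC m) := by
  rw [linearCombination_gammaC_L1C, gammaC_bracket_left, gammaC_bracket_right,
    ← Finsupp.single_sub, ← Finsupp.single_sub, beta1C]
  congr 1
  ring

/-- `β⁽¹⁾` is a 2-coboundary: `β⁽¹⁾ = d₁γ` for some linear map `γ : L₁ → L₁`;
hence its class in `H²(L₁,L₁)` is zero. -/
theorem beta1_is_coboundary :
    ∃ γ : (PosIdx →₀ ℂ) →ₗ[ℂ] (PosIdx →₀ ℂ),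
      ∀ x y : PosIdx →₀ ℂ,
        brP beta1C x y = γ (brP L1C x y) - brP L1C (γ x) y - brP L1C x (γ y) := by
  set γ := Finsupp.linearCombination ℂ gammaC
  suffices h : brPBilin beta1C + (brPBilin L1C).compl₂ γ + brPBilin L1C ∘ₗ γ
      = (brPBilin L1C).compr₂ γ by
    refine ⟨γ, fun x y => ?_⟩
    simp only [← brPBilin_apply]
    exact eq_sub_of_add_eq (eq_sub_of_add_eq (LinearMap.congr_fun₂ h x y))
  ext n m : 4
  simp [brPBilin_single_single, γ, beta1C_eq_coboundary_gammaC n m]
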